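/- arXiv:1110.4324 — 3 statements merged into one kernel-verified Lean document; each statement's English description precedes it below -/
import Mathlib

section
/- Let F be a finite set of at least d+1 points in ℝ^d (d ≥ 2) and let C be a convex set in ℝ^d. Then there exists a translate of C covering F (i.e., there is t ∈ ℝ^d with F ⊆ t + C) if and only if every subset of F consisting of d+1 points can be covered by a translate of C. -/
/-! A translate `t + C` covers `F` exactly when `t` lies in `⋂ x ∈ F, (x - C)`. These sets are
convex, so by Helly's theorem the intersection is nonempty as soon as every `d + 1` of them meet. -/

open Finset Module

theorem Convex.setOf_sub_mem {𝕜 E : Type*} [Ring 𝕜] [PartialOrder 𝕜] [AddCommGroup E]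
    [Module 𝕜 E] {C : Set E} (hC : Convex 𝕜 C) (x : E) : Convex 𝕜 {t | x - t ∈ C} := by
  have hset : {t | x - t ∈ C} = (fun t ↦ -x + t) ⁻¹' (-C) := by
    ext t
    simp [neg_add_eq_sub]
  exact hset ▸ hC.neg.translate_preimage_right (-x)

theorem Convex.exists_translate_covers_of_forall_card_eq {𝕜 E : Type*} [Field 𝕜] [LinearOrder 𝕜]
    [IsStrictOrderedRing 𝕜] [AddCommGroup E] [Module 𝕜 E] [FiniteDimensional 𝕜 E]
    {C : Set E} (hC : Convex 𝕜 C) {F : Finset E} (hF : finrank 𝕜 E + 1 ≤ #F)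
    (hcover : ∀ G ⊆ F, #G = finrank 𝕜 E + 1 → ∃ t : E, ∀ x ∈ G, x - t ∈ C) :
    ∃ t : E, ∀ x ∈ F, x - t ∈ C := by
  obtain ⟨t, ht⟩ := Convex.helly_theorem (F := fun x ↦ {t | x - t ∈ C}) hF
    (fun x _ ↦ hC.setOf_sub_mem x)
    (fun G hG hcard ↦ (hcover G hG hcard).imp fun _ ht ↦ Set.mem_iInter₂.mpr ht)
  exact ⟨t, Set.mem_iInter₂.mp ht⟩

theorem translate_covers_iff_every_d_add_one_points_general
    {d : ℕ} (F : Finset (EuclideanSpace ℝ (Fin d))) (hF : d + 1 ≤ F.card)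
    (C : Set (EuclideanSpace ℝ (Fin d))) (hC : Convex ℝ C) :
    (∃ t : EuclideanSpace ℝ (Fin d), ∀ x ∈ F, x - t ∈ C) ↔
      ∀ G ⊆ F, G.card = d + 1 → ∃ t : EuclideanSpace ℝ (Fin d), ∀ x ∈ G, x - t ∈ C := by
  refine ⟨fun ⟨t, ht⟩ G hG _ ↦ ⟨t, fun x hx ↦ ht x (hG hx)⟩, fun hcover ↦ ?_⟩
  refine hC.exists_translate_covers_of_forall_card_eq ?_ ?_ <;> rwa [finrank_euclideanSpace_fin]

/-- Helly-type translate covering theorem: a finite set `F` of at least `d + 1` points in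
`ℝ^d` can be covered by a translate of a convex set `C` if and only if every `d + 1`
points of `F` can be covered by a translate of `C`. -/
theorem translate_covers_iff_every_d_add_one_points
    {d : ℕ} (hd : 2 ≤ d) (F : Finset (EuclideanSpace ℝ (Fin d))) (hF : d + 1 ≤ F.card)
    (C : Set (EuclideanSpace ℝ (Fin d))) (hC : Convex ℝ C) :
    (∃ t : EuclideanSpace ℝ (Fin d), ∀ x ∈ F, x - t ∈ C) ↔
      ∀ G ⊆ F, G.card = d + 1 → ∃ t : EuclideanSpace ℝ (Fin d), ∀ x ∈ G, x - t ∈ C :=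
  translate_covers_iff_every_d_add_one_points_general F hF C hC
end

section
/- Let F = {f_1, f_2, …, f_n} be a finite set of points and C a convex body in ℝ^d, d ≥ 2. Then F cannot be translated into the interior of C if and only if there exist indices 1 ≤ i_1 < i_2 < … < i_s ≤ n, closed supporting halfspaces H⁺_{i_1}, …, H⁺_{i_s} of C, and a translation vector t ∈ ℝ^d such that: (i) for each j, the point t + f_{i_j} belongs to the closed halfspace H⁻_{i_j} whose boundary hyperplane coincides with that of H⁺_{i_j} and whose interior is disjoint from the interior of H⁺_{i_j}; and (ii) the intersection H⁺_{i_1} ∩ … ∩ H⁺_{i_s} is nearly bounded. -/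
open scoped RealInnerProductSpace

noncomputable section

/-- A set is nearly bounded if it lies between two parallel hyperplanes. -/
def NearlyBounded {d : ℕ} (S : Set (EuclideanSpace ℝ (Fin d))) : Prop :=
  ∃ u : EuclideanSpace ℝ (Fin d), ‖u‖ = 1 ∧ ∃ a b : ℝ,
    ∀ x ∈ S, a ≤ ⟪u, x⟫ ∧ ⟪u, x⟫ ≤ b

/-!
If `t' + F ⊆ int C`, then `w = t' - t` strictly increases every `⟪v j, ·⟫`, and so does every
direction close to `w`. All of them are recession directions of `⋂ H⁺_j`, which is impossible
for a set lying between two parallel hyperplanes.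

Conversely, let `ρ` be the gauge of `C` centred at an interior point `x₀` and choose `t`
minimising `r = maxᵢ ρ (t + fᵢ)`. Then `r ≥ 1`, and `t + F` lies in the homothetic copy
`Cᵣ = x₀ + r • (C - x₀) ⊇ C`, while no translate of `F` fits into its interior. Separating the
open convex set `∏ᵢ (int Cᵣ - fᵢ)` from the diagonal of `Eⁿ` gives functionals `ψᵢ`, not all
zero, with `∑ ψᵢ = 0` and `ψᵢ ≤ ψᵢ (t + fᵢ)` on `Cᵣ`. The nonzero `-ψᵢ` are the inner normals
of the halfspaces, and `∑ ψᵢ = 0` makes their intersection nearly bounded.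
-/

open Set Filter Topology
open scoped Pointwise

theorem geometric_hahn_banach_open_submodule {X : Type*} [AddCommGroup X] [Module ℝ X]
    [TopologicalSpace X] [IsTopologicalAddGroup X] [ContinuousSMul ℝ X] {A : Set X}
    (hA₁ : Convex ℝ A) (hA₂ : IsOpen A) (V : Submodule ℝ X) (disj : Disjoint A V) :
    ∃ φ : StrongDual ℝ X, (∀ v ∈ V, φ v = 0) ∧ ∀ a ∈ A, φ a < 0 := by
  obtain ⟨φ, u, hφA, hφV⟩ := geometric_hahn_banach_open hA₁ hA₂ V.convex disj
  -- `φ` is linear and bounded below by `u` on `V`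
  have hV : ∀ v ∈ V, φ v = 0 := by
    intro v hv
    by_contra h
    have := hφV _ (V.smul_mem ((u - 1) / φ v) hv)
    rw [map_smul, smul_eq_mul, div_mul_cancel₀ _ h] at this
    linarith
  exact ⟨φ, hV, fun a ha => (hφA a ha).trans_le (by simpa using hφV 0 V.zero_mem)⟩

theorem exists_functionals_sum_eq_zero_of_not_exists_translate_interior {E : Type*}
    [AddCommGroup E] [Module ℝ E] [TopologicalSpace E] [IsTopologicalAddGroup E]
    [ContinuousSMul ℝ E] {ι : Type*} [Fintype ι] {K : Set E} (hK : Convex ℝ K)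
    (hKint : (interior K).Nonempty) (f : ι → E) {t : E}
    (ht : ∀ i, t + f i ∈ closure K) (hno : ¬ ∃ t', ∀ i, t' + f i ∈ interior K) :
    ∃ ψ : ι → StrongDual ℝ E, ψ ≠ 0 ∧ ∑ i, ψ i = 0 ∧
      ∀ i, ∀ x ∈ closure K, ψ i x ≤ ψ i (t + f i) := by
  classical
  set U : Set (ι → E) := univ.pi fun i => (· + f i) ⁻¹' interior K
  set diag : E →ₗ[ℝ] ι → E := LinearMap.pi fun _ => LinearMap.id
  have hdisj : Disjoint U (LinearMap.range diag) := by
    rw [disjoint_right]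
    rintro _ ⟨t', rfl⟩ ht'
    exact hno ⟨t', fun i => ht' i (mem_univ i)⟩
  obtain ⟨φ, hφΔ, hφU⟩ := geometric_hahn_banach_open_submodule
    (convex_pi fun i _ => hK.interior.translate_preimage_left (f i))
    (isOpen_set_pi finite_univ fun i _ => isOpen_interior.preimage (continuous_add_const (f i)))
    _ hdisj
  set ψ : ι → StrongDual ℝ E := fun i => φ.comp (ContinuousLinearMap.single ℝ (fun _ => E) i)
  have hφ : ∀ y, φ y = ∑ i, ψ i (y i) := fun y => by
    conv_lhs => rw [← Finset.univ_sum_single y]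
    simp [ψ, map_sum]
  obtain ⟨k, hk⟩ := hKint
  refine ⟨ψ, fun hψ => ?_, ?_, fun i x hx => ?_⟩
  · have := hφU (fun i => k - f i) fun i _ => by simpa using hk
    simp [hφ, hψ] at this
  · ext t'
    simpa [hφ, diag] using hφΔ _ ⟨t', rfl⟩
  have hcl : ∀ j, closure ((· + f j) ⁻¹' interior K) = (· + f j) ⁻¹' closure K := fun j => by
    rw [← hK.closure_interior_eq_closure_of_nonempty_interior ⟨k, hk⟩]
    exact ((Homeomorph.addRight (f j)).preimage_closure _).symm
  have hclU : diag t + Pi.single i (x - (t + f i)) ∈ closure U := by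
    simp only [U, closure_pi_set, hcl, Set.mem_pi, mem_univ, mem_preimage, forall_const]
    intro j
    rcases eq_or_ne j i with rfl | hji
    · convert hx using 1
      simp only [diag, Pi.add_apply, LinearMap.pi_apply, LinearMap.id_apply, Pi.single_eq_same]
      abel
    · simpa [diag, hji] using ht j
  have hle : φ (diag t + Pi.single i (x - (t + f i))) ≤ 0 :=
    closure_minimal (fun y hy => (hφU y hy).le) (isClosed_le φ.continuous continuous_const) hclU
  have : ψ i (x - (t + f i)) ≤ 0 := by simpa [ψ, hφΔ _ ⟨t, rfl⟩] using hle
  rwa [map_sub, sub_nonpos] at this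

section Gauge

variable {E : Type*} [NormedAddCommGroup E] [NormedSpace ℝ E] {s : Set E}

theorem tendsto_gauge_cocompact_atTop [ProperSpace E] (hs : Absorbent ℝ s)
    (hb : Bornology.IsBounded s) : Tendsto (gauge s) (cocompact E) atTop := by
  obtain ⟨R, hR, hsR⟩ := hb.subset_closedBall_lt 0 0
  exact tendsto_atTop_mono (fun x => le_gauge_of_subset_closedBall hs hR.le hsR)
    (tendsto_norm_cocompact_atTop.atTop_div_const hR)

theorem mem_closure_smul_iff_gauge_le (hc : Convex ℝ s) (hs : s ∈ 𝓝 0) {r : ℝ} (hr : 0 < r)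
    {y : E} : y ∈ closure (r • s) ↔ gauge s y ≤ r := by
  rw [← gauge_le_one_iff_mem_closure (hc.smul r) ((set_smul_mem_nhds_zero_iff hr.ne').2 hs),
    gauge_smul_left_of_nonneg hr.le, Pi.smul_apply, smul_eq_mul, inv_mul_le_one₀ hr]

theorem mem_interior_smul_iff_gauge_lt (hc : Convex ℝ s) (hs : s ∈ 𝓝 0) {r : ℝ} (hr : 0 < r)
    {y : E} : y ∈ interior (r • s) ↔ gauge s y < r := by
  rw [← gauge_lt_one_iff_mem_interior (hc.smul r) ((set_smul_mem_nhds_zero_iff hr.ne').2 hs),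
    gauge_smul_left_of_nonneg hr.le, Pi.smul_apply, smul_eq_mul, inv_mul_lt_one₀ hr]

end Gauge

theorem exists_translate_minimizing_max {E : Type*} [AddCommGroup E] [TopologicalSpace E]
    [IsTopologicalAddGroup E] {ι : Type*} [Fintype ι] [Nonempty ι] {ρ : E → ℝ}
    (hρ : Continuous ρ) (hcoer : Tendsto ρ (cocompact E) atTop) (f : ι → E) :
    ∃ t r, (∀ i, ρ (t + f i) ≤ r) ∧ ∀ t', ∃ i, r ≤ ρ (t' + f i) := by
  set Φ : E → ℝ := fun t => Finset.univ.sup' Finset.univ_nonempty fun i => ρ (t + f i)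
  have hΦ : Continuous Φ :=
    Continuous.finset_sup'_apply _ fun i _ => hρ.comp (continuous_add_const (f i))
  obtain ⟨i₀⟩ := ‹Nonempty ι›
  have hΦcoer : Tendsto Φ (cocompact E) atTop :=
    tendsto_atTop_mono (fun t => Finset.le_sup' (fun i => ρ (t + f i)) (Finset.mem_univ i₀))
      (hcoer.comp (Homeomorph.addRight (f i₀)).map_cocompact.le)
  obtain ⟨t, ht⟩ := hΦ.exists_forall_le hΦcoer
  refine ⟨t, Φ t, fun i => Finset.le_sup' (fun i => ρ (t + f i)) (Finset.mem_univ i), fun t' => ?_⟩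
  obtain ⟨i, -, hi⟩ := Finset.exists_mem_eq_sup' Finset.univ_nonempty fun i => ρ (t' + f i)
  exact ⟨i, (ht t').trans hi.le⟩

theorem exists_translate_functionals_sum_eq_zero {E : Type*} [NormedAddCommGroup E]
    [NormedSpace ℝ E] [ProperSpace E] {ι : Type*} [Fintype ι] {C : Set E} (hCc : IsCompact C)
    (hCconv : Convex ℝ C) (hCint : (interior C).Nonempty) (f : ι → E)
    (H : ¬ ∃ t, ∀ i, t + f i ∈ interior C) :
    ∃ t, ∃ ψ : ι → StrongDual ℝ E, ψ ≠ 0 ∧ ∑ i, ψ i = 0 ∧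
      ∀ i, ∀ x ∈ C, ψ i x ≤ ψ i (t + f i) := by
  obtain ⟨x₀, hx₀⟩ := hCint
  have : Nonempty ι := by
    by_contra h
    exact H ⟨x₀, fun i => (not_nonempty_iff.1 h).elim i⟩
  set s := (x₀ + ·) ⁻¹' C
  have hint : interior s = (x₀ + ·) ⁻¹' interior C :=
    ((Homeomorph.addLeft x₀).preimage_interior C).symm
  have hs : s ∈ 𝓝 0 := by
    rw [← interior_mem_nhds, mem_nhds_iff]
    exact ⟨interior s, le_rfl, isOpen_interior, by simpa [hint] using hx₀⟩
  have hsc : Convex ℝ s := hCconv.translate_preimage_right x₀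
  obtain ⟨t, r, ht, hmin⟩ := exists_translate_minimizing_max (continuous_gauge hsc hs)
    (tendsto_gauge_cocompact_atTop (absorbent_nhds_zero hs)
      ((Homeomorph.addLeft x₀).isCompact_preimage.2 hCc).isBounded) (fun i => f i - x₀)
  have hr : 1 ≤ r := by
    by_contra! hr
    refine H ⟨t, fun i => ?_⟩
    have := (gauge_lt_one_iff_mem_interior hsc hs).1 ((ht i).trans_lt hr)
    rwa [hint, mem_preimage, show x₀ + (t + (f i - x₀)) = t + f i by abel] at this
  have hr₀ : 0 < r := zero_lt_one.trans_le hr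
  obtain ⟨ψ, hψ, hsum, hle⟩ := exists_functionals_sum_eq_zero_of_not_exists_translate_interior
    (hsc.smul r) ⟨0, mem_interior_iff_mem_nhds.2 ((set_smul_mem_nhds_zero_iff hr₀.ne').2 hs)⟩
    (fun i => f i - x₀) (fun i => (mem_closure_smul_iff_gauge_le hsc hs hr₀).2 (ht i))
    (fun ⟨t', ht'⟩ => by
      obtain ⟨i, hi⟩ := hmin t'
      exact hi.not_gt ((mem_interior_smul_iff_gauge_lt hsc hs hr₀).1 (ht' i)))
  refine ⟨t, ψ, hψ, hsum, fun i x hx => ?_⟩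
  have hxs : x - x₀ ∈ closure (r • s) := (mem_closure_smul_iff_gauge_le hsc hs hr₀).2
    ((gauge_le_one_of_mem (by simpa [s] using hx)).trans hr)
  have := hle i _ hxs
  simp only [map_sub, map_add] at this ⊢
  linarith

theorem exists_pos_add_smul_mem {E : Type*} [AddCommGroup E] [Module ℝ E] [TopologicalSpace E]
    [ContinuousAdd E] [ContinuousSMul ℝ E] {U : Set E} {x : E} (hU : U ∈ 𝓝 x) (v : E) :
    ∃ ε : ℝ, 0 < ε ∧ x + ε • v ∈ U := by
  have hcont : Continuous fun ε : ℝ => x + ε • v := by fun_prop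
  have hlim : Tendsto (fun ε : ℝ => x + ε • v) (𝓝[>] 0) (𝓝 x) :=
    (hcont.tendsto' 0 x (by simp)).mono_left nhdsWithin_le_nhds
  exact ((hlim.eventually hU).and self_mem_nhdsWithin).exists.imp fun ε h => ⟨h.2, h.1⟩

section InnerProduct

variable {F : Type*} [NormedAddCommGroup F] [InnerProductSpace ℝ F]

theorem lt_inner_of_mem_interior {C : Set F} {v : F} (hv : v ≠ 0) {c : ℝ}
    (hC : ∀ x ∈ C, c ≤ ⟪v, x⟫) {x : F} (hx : x ∈ interior C) : c < ⟪v, x⟫ := by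
  obtain ⟨ε, hε, hmem⟩ := exists_pos_add_smul_mem (mem_interior_iff_mem_nhds.1 hx) (-v)
  have h := hC _ hmem
  rw [inner_add_right, inner_smul_right, inner_neg_right, real_inner_self_eq_norm_sq] at h
  have : 0 < ‖v‖ ^ 2 := by positivity
  nlinarith

theorem inner_nonpos_of_forall_inner_add_smul_le {u x w : F} {b : ℝ}
    (h : ∀ a : ℝ, 0 ≤ a → ⟪u, x + a • w⟫ ≤ b) : ⟪u, w⟫ ≤ 0 := by
  by_contra! hpos
  have hlim : Tendsto (fun a : ℝ => ⟪u, x⟫ + a * ⟪u, w⟫) atTop atTop :=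
    tendsto_atTop_add_const_left _ _ (tendsto_id.atTop_mul_const hpos)
  obtain ⟨a, hab, ha⟩ := ((hlim.eventually_gt_atTop b).and (eventually_ge_atTop 0)).exists
  have := h a ha
  rw [inner_add_right, inner_smul_right] at this
  linarith

end InnerProduct

section Euclidean

variable {d : ℕ}

local notation "E" => EuclideanSpace ℝ (Fin d)

theorem nearlyBounded_iInter_of_sum_eq_zero {ι : Type*} [Fintype ι] {v : ι → E}
    (hsum : ∑ j, v j = 0) {j₀ : ι} (hj₀ : v j₀ ≠ 0) (c : ι → ℝ) :
    NearlyBounded (⋂ j, {x : E | c j ≤ ⟪v j, x⟫}) := by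
  classical
  refine ⟨‖v j₀‖⁻¹ • v j₀, norm_smul_inv_norm hj₀, ‖v j₀‖⁻¹ * c j₀,
    ‖v j₀‖⁻¹ * -∑ j ∈ Finset.univ.erase j₀, c j, fun x hx => ?_⟩
  have hc : ∀ j, c j ≤ ⟪v j, x⟫ := fun j => mem_iInter.1 hx j
  have hx₀ : ⟪v j₀, x⟫ = -∑ j ∈ Finset.univ.erase j₀, ⟪v j, x⟫ := by
    have h0 : ∑ j, ⟪v j, x⟫ = 0 := by rw [← sum_inner, hsum, inner_zero_left]
    rw [← Finset.add_sum_erase _ _ (Finset.mem_univ j₀)] at h0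
    linarith
  have hle : ∑ j ∈ Finset.univ.erase j₀, c j ≤ ∑ j ∈ Finset.univ.erase j₀, ⟪v j, x⟫ :=
    Finset.sum_le_sum fun j _ => hc j
  rw [real_inner_smul_left]
  constructor <;> gcongr
  · exact hc j₀
  · linarith

theorem exists_halfspaces_of_functionals {n : ℕ} {C : Set E} (hCc : IsCompact C)
    (hCne : C.Nonempty) (f : Fin n → E) {t : E} {ψ : Fin n → StrongDual ℝ E} (hψ : ψ ≠ 0)
    (hsum : ∑ i, ψ i = 0) (hle : ∀ i, ∀ x ∈ C, ψ i x ≤ ψ i (t + f i)) :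
    ∃ (s : ℕ) (idx : Fin s → Fin n) (v : Fin s → EuclideanSpace ℝ (Fin d))
      (c : Fin s → ℝ) (t : EuclideanSpace ℝ (Fin d)),
      1 ≤ s ∧ StrictMono idx ∧
      (∀ j, v j ≠ 0) ∧
      (∀ j, ∀ x ∈ C, c j ≤ ⟪v j, x⟫) ∧
      (∀ j, ∃ x ∈ C, ⟪v j, x⟫ = c j) ∧
      (∀ j, ⟪v j, t + f (idx j)⟫ ≤ c j) ∧
      NearlyBounded (⋂ j, {x : EuclideanSpace ℝ (Fin d) | c j ≤ ⟪v j, x⟫}) := by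
  classical
  set J := Finset.univ.filter fun i => ψ i ≠ 0
  set idx := J.orderEmbOfFin rfl
  have hidx : ∀ j, ψ (idx j) ≠ 0 := fun j => (Finset.mem_filter.1 (J.orderEmbOfFin_mem rfl j)).2
  set v : Fin J.card → E := fun j => -(InnerProductSpace.toDual ℝ E).symm (ψ (idx j))
  have hv : ∀ j x, ⟪v j, x⟫ = -ψ (idx j) x := fun j x => by
    simp [v, inner_neg_left, InnerProductSpace.toDual_symm_apply]
  have hvne : ∀ j, v j ≠ 0 := fun j => by simpa [v] using hidx j
  have hJ : 0 < J.card := by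
    obtain ⟨i, hi⟩ := Function.ne_iff.1 hψ
    exact Finset.card_pos.2 ⟨i, Finset.mem_filter.2 ⟨Finset.mem_univ i, hi⟩⟩
  have hvsum : ∑ j, v j = 0 := by
    have : ∑ j, ψ (idx j) = 0 := calc
      ∑ j, ψ (idx j) = ∑ i ∈ J, ψ i := by
        conv_rhs => rw [← Finset.map_orderEmbOfFin_univ J rfl, Finset.sum_map]
        rfl
      _ = 0 := by rw [Finset.sum_filter_ne_zero, hsum]
    rw [Finset.sum_neg_distrib, ← map_sum, this, map_zero, neg_zero]
  choose x hxC hxmin using fun j => hCc.exists_isMinOn hCne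
    (continuous_const.inner continuous_id : Continuous fun y => ⟪v j, y⟫).continuousOn
  refine ⟨J.card, idx, v, fun j => ⟪v j, x j⟫, t, hJ, idx.strictMono, hvne,
    fun j y hy => hxmin j hy, fun j => ⟨x j, hxC j, rfl⟩, fun j => ?_,
    nearlyBounded_iInter_of_sum_eq_zero hvsum (hvne ⟨0, hJ⟩) _⟩
  change ⟪v j, _⟫ ≤ ⟪v j, x j⟫
  rw [hv, hv, neg_le_neg_iff]
  exact hle _ _ (hxC j)

theorem not_exists_translate_interior_of_halfspaces {ι : Type*} [Finite ι] {C : Set E}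
    (hC : C.Nonempty) {g v : ι → E} {c : ι → ℝ} {t : E} (hv : ∀ j, v j ≠ 0)
    (hsupp : ∀ j, ∀ x ∈ C, c j ≤ ⟪v j, x⟫)
    (hg : ∀ j, ⟪v j, t + g j⟫ ≤ c j) (hnb : NearlyBounded (⋂ j, {x : E | c j ≤ ⟪v j, x⟫})) :
    ¬ ∃ t', ∀ j, t' + g j ∈ interior C := by
  rintro ⟨t', ht'⟩
  obtain ⟨u, hu, a, b, hab⟩ := hnb
  obtain ⟨x, hx⟩ := hC
  -- every direction increasing all `⟪v j, ·⟫` is a recession direction of the intersection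
  have hrec : ∀ w, (∀ j, 0 < ⟪v j, w⟫) → ⟪u, w⟫ = 0 := by
    intro w hw
    have hray : ∀ a : ℝ, 0 ≤ a → x + a • w ∈ ⋂ j, {x : E | c j ≤ ⟪v j, x⟫} := fun a ha =>
      mem_iInter.2 fun j => by
        rw [mem_ofPred_eq, inner_add_right, inner_smul_right]
        nlinarith [hsupp j x hx, hw j]
    refine le_antisymm (inner_nonpos_of_forall_inner_add_smul_le fun a ha => (hab _ (hray a ha)).2)
      ?_
    have := inner_nonpos_of_forall_inner_add_smul_le (u := -u) (b := -a)
      fun a' ha' => by rw [inner_neg_left, neg_le_neg_iff]; exact (hab _ (hray a' ha')).1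
    rwa [inner_neg_left, neg_nonpos] at this
  have hw : ∀ j, 0 < ⟪v j, t' - t⟫ := fun j => by
    have := lt_inner_of_mem_interior (hv j) (hsupp j) (ht' j)
    rw [show t' - t = (t' + g j) - (t + g j) by abel, inner_sub_right]
    linarith [hg j]
  have hopen : IsOpen {w : E | ∀ j, 0 < ⟪v j, w⟫} := by
    rw [ofPred_forall]
    exact isOpen_iInter_of_finite fun j => isOpen_lt continuous_const
      (continuous_const.inner continuous_id)
  obtain ⟨ε, hε, hεw⟩ := exists_pos_add_smul_mem (hopen.mem_nhds hw) u
  have := hrec _ hεw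
  rw [inner_add_right, hrec _ hw, inner_smul_right, real_inner_self_eq_norm_sq, hu] at this
  linarith

end Euclidean

theorem cannot_translate_into_interior_iff_general
    {d n : ℕ} (f : Fin n → EuclideanSpace ℝ (Fin d))
    (C : Set (EuclideanSpace ℝ (Fin d)))
    (hCc : IsCompact C) (hCconv : Convex ℝ C) (hCint : (interior C).Nonempty) :
    (¬ ∃ t : EuclideanSpace ℝ (Fin d), ∀ i : Fin n, t + f i ∈ interior C) ↔
      ∃ (s : ℕ) (idx : Fin s → Fin n) (v : Fin s → EuclideanSpace ℝ (Fin d))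
        (c : Fin s → ℝ) (t : EuclideanSpace ℝ (Fin d)),
        1 ≤ s ∧ StrictMono idx ∧
        (∀ j, v j ≠ 0) ∧
        (∀ j, ∀ x ∈ C, c j ≤ ⟪v j, x⟫) ∧
        (∀ j, ∃ x ∈ C, ⟪v j, x⟫ = c j) ∧
        (∀ j, ⟪v j, t + f (idx j)⟫ ≤ c j) ∧
        NearlyBounded (⋂ j, {x : EuclideanSpace ℝ (Fin d) | c j ≤ ⟪v j, x⟫}) := by
  constructor
  · intro H
    obtain ⟨t, ψ, hψ, hsum, hle⟩ := exists_translate_functionals_sum_eq_zero hCc hCconv hCint f H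
    exact exists_halfspaces_of_functionals hCc (hCint.mono interior_subset) f hψ hsum hle
  · rintro ⟨s, idx, v, c, t, -, -, hv, hsupp, -, hg, hnb⟩ ⟨t', ht'⟩
    exact not_exists_translate_interior_of_halfspaces (hCint.mono interior_subset) hv hsupp hg hnb
      ⟨t', fun j => ht' (idx j)⟩

/-- A finite set `F = {f 1, …, f n}` cannot be translated into the interior of a convex body
`C` if and only if there are closed supporting halfspaces `H⁺` of `C` (encoded by their
inward normal vectors `v j ≠ 0` and levels `c j`, so `H⁺ = {x | c j ≤ ⟪v j, x⟫}`) assigned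
to some of the points, and a translation `t`, such that each translated point `t + f (idx j)`
lies in the complementary closed halfspace `H⁻ = {x | ⟪v j, x⟫ ≤ c j}`, and the intersection
of the halfspaces `H⁺` is nearly bounded. -/
theorem cannot_translate_into_interior_iff
    {d n : ℕ} (hd : 2 ≤ d) (hn : 1 ≤ n) (f : Fin n → EuclideanSpace ℝ (Fin d))
    (C : Set (EuclideanSpace ℝ (Fin d)))
    (hCc : IsCompact C) (hCconv : Convex ℝ C) (hCint : (interior C).Nonempty) :
    (¬ ∃ t : EuclideanSpace ℝ (Fin d), ∀ i : Fin n, t + f i ∈ interior C) ↔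
      ∃ (s : ℕ) (idx : Fin s → Fin n) (v : Fin s → EuclideanSpace ℝ (Fin d))
        (c : Fin s → ℝ) (t : EuclideanSpace ℝ (Fin d)),
        1 ≤ s ∧ StrictMono idx ∧
        (∀ j, v j ≠ 0) ∧
        (∀ j, ∀ x ∈ C, c j ≤ ⟪v j, x⟫) ∧
        (∀ j, ∃ x ∈ C, ⟪v j, x⟫ = c j) ∧
        (∀ j, ⟪v j, t + f (idx j)⟫ ≤ c j) ∧
        NearlyBounded (⋂ j, {x : EuclideanSpace ℝ (Fin d) | c j ≤ ⟪v j, x⟫}) :=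
  cannot_translate_into_interior_iff_general f C hCc hCconv hCint
end
end

section
/- For every real number x with 0.7 < x < π/4, one has g(x) > 0.4, where g(x) = (cos x + cos x / cos 2x) − (1 + √(1 + cos²x / cos²2x − 2 cos²x / cos 2x)). (Note that cos 2x > 0 on this interval, so g is well defined, and the expression under the square root equals (cos x / cos 2x − cos x)² + sin²x ≥ 0.) -/
open Real

/-
With `c = cos x`, `s = sin x`, `d = cos 2x` and `A = c/d - c`, the radicand is `A² + s²`, and the
tangent-line bound `√(A² + s²) ≤ A + s²/(2A)` gives `g x ≥ 2c - 1 - d/(4c)`, because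
`A = 2cs²/d` makes `s²/(2A) = d/(4c)`. With `d = 2c² - 1` this lower bound exceeds `0.4` as soon
as `c ≥ 0.7`, and `cos x > cos (π/4) = √2/2 > 0.7` on the interval.
-/

theorem Real.sqrt_sq_add_le_add_div {a b : ℝ} (ha : 0 < a) (hb : 0 ≤ b) :
    √(a ^ 2 + b) ≤ a + b / (2 * a) := by
  rw [Real.sqrt_le_iff]
  refine ⟨by positivity, ?_⟩
  have hexpand : (a + b / (2 * a)) ^ 2 = a ^ 2 + b + (b / (2 * a)) ^ 2 := by
    field_simp
    ring
  nlinarith [sq_nonneg (b / (2 * a))]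

theorem two_mul_sub_one_sub_div_le_sub_sqrt {c s d : ℝ} (hcs : s ^ 2 + c ^ 2 = 1)
    (hd : d = 2 * c ^ 2 - 1) (hc : 0 < c) (hd₀ : 0 < d) (hs : s ≠ 0) :
    2 * c - 1 - d / (4 * c) ≤ (c + c / d) - (1 + √(1 + c ^ 2 / d ^ 2 - 2 * (c ^ 2 / d))) := by
  set A := c / d - c
  have hA : A = 2 * c * s ^ 2 / d := by
    rw [eq_div_iff hd₀.ne', sub_mul, div_mul_cancel₀ _ hd₀.ne']
    linear_combination (-2 * c) * hcs - c * hd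
  have hA₀ : 0 < A := by
    rw [hA]
    positivity
  have hradicand : 1 + c ^ 2 / d ^ 2 - 2 * (c ^ 2 / d) = A ^ 2 + s ^ 2 := by
    linear_combination -hcs
  have htangent : s ^ 2 / (2 * A) = d / (4 * c) := by
    rw [hA]
    field_simp
    ring
  have hsqrt := Real.sqrt_sq_add_le_add_div hA₀ (sq_nonneg s)
  rw [htangent, ← hradicand] at hsqrt
  simp only [A] at hsqrt
  linarith

theorem lt_two_mul_sub_one_sub_div_of_le {c : ℝ} (hc : 0.7 ≤ c) :
    0.4 < 2 * c - 1 - (2 * c ^ 2 - 1) / (4 * c) := by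
  have hc₀ : 0 < 4 * c := by linarith
  rw [lt_sub_iff_add_lt, ← lt_sub_iff_add_lt', div_lt_iff₀ hc₀]
  nlinarith

/-- For all `x` with `0.7 < x < π/4`, the function
`g x = (cos x + cos x / cos (2x)) − (1 + √(1 + cos²x / cos²(2x) − 2 cos²x / cos (2x)))`
satisfies `g x > 0.4`. -/
theorem g_gt_of_mem_Ioo (x : ℝ) (hx₁ : (0.7 : ℝ) < x) (hx₂ : x < π / 4) :
    (0.4 : ℝ) <
      (Real.cos x + Real.cos x / Real.cos (2 * x)) -
        (1 + Real.sqrt (1 + Real.cos x ^ 2 / Real.cos (2 * x) ^ 2 -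
          2 * (Real.cos x ^ 2 / Real.cos (2 * x)))) := by
  have hx₀ : 0 < x := by linarith
  have hcos : 0.7 < cos x := by
    have hsqrt2 : 1.4 < √2 := by
      rw [Real.lt_sqrt (by norm_num)]
      norm_num
    have := Real.cos_lt_cos_of_nonneg_of_le_pi hx₀.le (by linarith [pi_pos]) hx₂
    rw [Real.cos_pi_div_four] at this
    linarith
  have hcos_two_mul : 0 < cos (2 * x) :=
    Real.cos_pos_of_mem_Ioo ⟨by linarith, by linarith⟩
  have hsin : sin x ≠ 0 := (Real.sin_pos_of_pos_of_lt_pi hx₀ (by linarith [pi_pos])).ne'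
  have hbound := two_mul_sub_one_sub_div_le_sub_sqrt (sin_sq_add_cos_sq x) (cos_two_mul x)
    (by linarith) hcos_two_mul hsin
  have := lt_two_mul_sub_one_sub_div_of_le hcos.le
  rw [← cos_two_mul] at this
  linarith
end
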